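/- arXiv:2408.00192 — 4 statements merged into one kernel-verified Lean document; each statement's English description precedes it below -/
import Mathlib

section
/- Let P = {t_1, ..., t_p} be a pot and suppose a graph G of order n is realized by P using R_j tiles of type t_j. Then the vector (R_1/n, ..., R_p/n) satisfies the construction matrix system: for each bond-edge type a_i, the sum over j of z_{i,j}·(R_j/n) = 0, and the sum of the entries R_j/n equals 1, where z_{i,j} is the net number of cohesive-ends of type a_i on tile t_j (unhatted counted +1, hatted counted −1). -/
/-- A finite multigraph on vertex type `V` with edge type `E`; each edge `e` has two
half-edges `(e, true)` and `(e, false)`, and `side e s` is the endpoint of the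
half-edge `(e, s)`.  Loops (both endpoints equal) and parallel edges are allowed. -/
structure Multigraph (V E : Type) where
  side : E → Bool → V

/-- Cohesive-end symbols over a type `B` of bond-edge types: `(b, false)` is the
unhatted symbol `b` and `(b, true)` is the hatted symbol `b̂`. -/
abbrev CEnd (B : Type) : Type := B × Bool

/-- Complementation (hatting) of cohesive-end symbols. -/
def CEnd.hat {B : Type} (σ : CEnd B) : CEnd B := (σ.1, !σ.2)

/-- An assembly design on a multigraph: a labelling of half-edges by cohesive-end
symbols such that the two half-edges of each edge receive complementary symbols. -/
structure AssemblyDesign (B : Type) {V E : Type} (G : Multigraph V E) where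
  label : E → Bool → CEnd B
  compl : ∀ e : E, label e true = CEnd.hat (label e false)

/-- The labelled degree `d_σ(v)`: the number of half-edges incident to `v`
labelled with cohesive-end symbol `σ`. -/
noncomputable def labelledDeg {B V E : Type} {G : Multigraph V E}
    (lam : AssemblyDesign B G) (v : V) (σ : CEnd B) : ℕ :=
  {p : E × Bool | G.side p.1 p.2 = v ∧ lam.label p.1 p.2 = σ}.ncard

/-- The degree of a vertex: the number of incident half-edges. -/
noncomputable def Multigraph.deg {V E : Type} (G : Multigraph V E) (v : V) : ℕ :=
  {p : E × Bool | G.side p.1 p.2 = v}.ncard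

/-- A tile: a multiset of cohesive-end symbols, given by its multiplicity function. -/
abbrev Tile (B : Type) : Type := CEnd B → ℕ

/-- The net number `z` of cohesive ends of bond-edge type `b` on tile `t`
(unhatted counted `+1`, hatted counted `−1`). -/
def netCount {B : Type} (t : Tile B) (b : B) : ℤ := (t (b, false) : ℤ) - t (b, true)

/-! Each edge carries one end `b` and one end `b̂`, so summed over all vertices the ends `b` and
`b̂` are equally numerous. Grouping the vertices by their tile turns this into
`∑ j, z b j * R j = 0`, and `∑ j, R j = n`; dividing by `n` gives the system. -/

@[simp]
lemma CEnd.hat_hat {B : Type} (σ : CEnd B) : σ.hat.hat = σ := by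
  simp [CEnd.hat]

@[simp]
lemma CEnd.hat_inj {B : Type} {σ τ : CEnd B} : σ.hat = τ.hat ↔ σ = τ :=
  Function.LeftInverse.injective CEnd.hat_hat |>.eq_iff

namespace AssemblyDesign

variable {B V E : Type} {G : Multigraph V E} (lam : AssemblyDesign B G)

lemma label_not (e : E) (s : Bool) : lam.label e (!s) = (lam.label e s).hat := by
  cases s
  · exact lam.compl e
  · rw [lam.compl e, CEnd.hat_hat]
    rfl

lemma ncard_label_hat (σ : CEnd B) :
    {q : E × Bool | lam.label q.1 q.2 = σ.hat}.ncard =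
      {q : E × Bool | lam.label q.1 q.2 = σ}.ncard := by
  have swap : Function.Involutive fun q : E × Bool => (q.1, !q.2) := fun q => by simp
  rw [← Set.ncard_image_of_injective _ swap.injective, swap.image_eq_preimage_symm]
  congr 1
  ext ⟨e, s⟩
  simp [label_not]

lemma sum_labelledDeg [Fintype V] [Finite E] (σ : CEnd B) :
    ∑ v, labelledDeg lam v σ = {q : E × Bool | lam.label q.1 q.2 = σ}.ncard := by
  classical
  cases nonempty_fintype E
  simp only [labelledDeg, Set.ncard_eq_toFinset_card', Set.toFinset_ofPred]
  rw [Finset.card_eq_sum_card_fiberwise (f := fun q => G.side q.1 q.2) (t := Finset.univ)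
    (by simp)]
  simp [Finset.filter_filter, and_comm]

lemma sum_labelledDeg_hat [Fintype V] [Finite E] (σ : CEnd B) :
    ∑ v, labelledDeg lam v σ.hat = ∑ v, labelledDeg lam v σ := by
  rw [sum_labelledDeg, sum_labelledDeg, ncard_label_hat]

lemma sum_netCount_labelledDeg [Fintype V] [Finite E] (b : B) :
    ∑ v, netCount (labelledDeg lam v) b = 0 := by
  simp only [netCount, Finset.sum_sub_distrib, ← Nat.cast_sum, sub_eq_zero]
  exact congrArg Nat.cast (sum_labelledDeg_hat lam (b, false)).symm

end AssemblyDesign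

lemma sum_ncard_fiber_mul {V ι R : Type} [Fintype V] [Fintype ι] [Semiring R] (f : V → ι)
    (g : ι → R) : ∑ j, ({v | f v = j}.ncard : R) * g j = ∑ v, g (f v) := by
  classical
  rw [← Fintype.sum_fiberwise' f g]
  congr with j
  simp [Set.ncard_eq_toFinset_card', Fintype.card_subtype, nsmul_eq_mul]

theorem stmt0_general {B V E : Type} [Fintype E]
    {p : ℕ} (P : Fin p → Tile B) (G : Multigraph V E)
    (lam : AssemblyDesign B G) (f : V → Fin p)
    (hf : ∀ v : V, (fun σ => labelledDeg lam v σ) = P (f v))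
    (R : Fin p → ℕ) (hR : ∀ j, R j = {v : V | f v = j}.ncard)
    (n : ℕ) (hn : n = Nat.card V) (hpos : 0 < n) :
    (∀ b : B, ∑ j : Fin p, (netCount (P j) b : ℚ) * ((R j : ℚ) / n) = 0) ∧
      ∑ j : Fin p, (R j : ℚ) / n = 1 := by
  have : Finite V := Nat.finite_of_card_ne_zero (hn ▸ hpos.ne')
  have := Fintype.ofFinite V
  have hR_sum (g : Fin p → ℚ) : ∑ j, (R j : ℚ) * g j = ∑ v, g (f v) := by
    simpa only [hR] using sum_ncard_fiber_mul f g
  constructor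
  · intro b
    calc ∑ j, (netCount (P j) b : ℚ) * (R j / n)
        = (∑ j, (R j : ℚ) * netCount (P j) b) / n := by
          rw [Finset.sum_div]
          congr with j
          ring
      _ = ((∑ v, netCount (labelledDeg lam v) b : ℤ) : ℚ) / n := by
          simp only [hR_sum, ← hf, Int.cast_sum]
      _ = 0 := by rw [lam.sum_netCount_labelledDeg, Int.cast_zero, zero_div]
  · have hn0 : (n : ℚ) ≠ 0 := by positivity
    have hcard : ∑ j, (R j : ℚ) = n := by
      simpa [hn, Nat.card_eq_fintype_card] using hR_sum 1
    rw [← Finset.sum_div, hcard, div_self hn0]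

/-- If a graph `G` of order `n > 0` is realized by the pot
`P = {t_1, …, t_p}` using `R j` tiles of type `t j`, then `(R 1 / n, …, R p / n)`
satisfies the construction matrix system: `∑ j z i j * (R j / n) = 0` for every
bond-edge type, and `∑ j R j / n = 1`. -/
theorem stmt0 {B V E : Type} [Fintype V] [Fintype E]
    {p : ℕ} (P : Fin p → Tile B) (G : Multigraph V E)
    (lam : AssemblyDesign B G) (f : V → Fin p)
    (hf : ∀ v : V, (fun σ => labelledDeg lam v σ) = P (f v))
    (R : Fin p → ℕ) (hR : ∀ j, R j = {v : V | f v = j}.ncard)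
    (n : ℕ) (hn : n = Nat.card V) (hpos : 0 < n) :
    (∀ b : B, ∑ j : Fin p, (netCount (P j) b : ℚ) * ((R j : ℚ) / n) = 0) ∧
      ∑ j : Fin p, (R j : ℚ) / n = 1 :=
  stmt0_general P G lam f hf R hR n hn hpos
end

section
/- For the complete graph K_n with n even, the pot P = {â^{n−1}, a^{n/2}·â^{n/2−1}} realizes K_n: label one vertex with the tile having n−1 hatted ends and the remaining n−1 vertices with the tile having n/2 unhatted and n/2−1 hatted ends; there is an orientation of K_n making this a valid assembly design with one bond-edge type. -/
/-- Rotational tournament relation on `Option (ZMod m)`: `none` loses to everyone,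
and `some a → some b` iff `(b - a).val ∈ [1, k]`. -/
def stmt14Rel (m k : ℕ) : Option (ZMod m) → Option (ZMod m) → Prop
  | none, _ => False
  | some _, none => True
  | some a, some b => (b - a).val ∈ Set.Icc 1 k

/-- For even `n > 0`, the pot `{â^(n−1), a^(n/2)·â^(n/2−1)}`
realizes `K_n`: there is an orientation (tournament) of `K_n` in which one vertex
has out-degree `0` and in-degree `n−1`, and every other vertex has out-degree `n/2`
and in-degree `n/2 − 1`. -/
theorem stmt14 (n : ℕ) (hn : 0 < n) (hev : Even n) :
    ∃ r : Fin n → Fin n → Prop,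
      (∀ v, ¬ r v v) ∧ (∀ u v : Fin n, u ≠ v → (r u v ↔ ¬ r v u)) ∧
      ∃ v₀ : Fin n,
        {u | r v₀ u}.ncard = 0 ∧ {u | r u v₀}.ncard = n - 1 ∧
        ∀ v : Fin n, v ≠ v₀ →
          {u | r v u}.ncard = n / 2 ∧ {u | r u v}.ncard = n / 2 - 1 := by
  obtain ⟨t, ht⟩ := hev
  have hn2 : 2 ≤ n := by omega
  set m := n - 1 with hm
  haveI : NeZero m := ⟨by omega⟩
  set k := (m - 1) / 2 with hk
  have hk2 : m = 2 * k + 1 := by omega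
  have ecard : Fintype.card (Fin n) = Fintype.card (Option (ZMod m)) := by
    simp [ZMod.card]; omega
  set e : Fin n ≃ Option (ZMod m) := Fintype.equivOfCardEq ecard with he
  refine ⟨fun u v => stmt14Rel m k (e u) (e v), ?_, ?_, ?_⟩
  · -- irreflexive
    intro v
    cases hx : e v with
    | none => simp [stmt14Rel, hx]
    | some a => simp [stmt14Rel, hx]
  · -- asymmetric
    intro u v huv
    have heuv : e u ≠ e v := fun h => huv (e.injective h)
    cases hx : e u with
    | none =>
      cases hy : e v with
      | none => exact absurd (hx.trans hy.symm) heuv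
      | some b => simp [stmt14Rel, hx, hy]
    | some a =>
      cases hy : e v with
      | none => simp [stmt14Rel, hx, hy]
      | some b =>
        have hab : a ≠ b := by rintro rfl; exact heuv (hx.trans hy.symm)
        simp only [stmt14Rel, hx, hy, Set.mem_Icc]
        have hd0 : b - a ≠ 0 := sub_ne_zero.mpr (Ne.symm hab)
        have hd0' : (b - a).val ≠ 0 := fun h => hd0 (ZMod.val_eq_zero _ |>.mp h)
        have hdlt : (b - a).val < m := ZMod.val_lt _
        have hneg : (a - b).val = m - (b - a).val := by
          have : a - b = -(b - a) := by ring
          rw [this, ZMod.neg_val, if_neg hd0]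
        rw [hneg]
        omega
  · -- the designated vertex
    refine ⟨e.symm none, ?_, ?_, ?_⟩
    · -- out-degree 0
      have : {u : Fin n | stmt14Rel m k (e (e.symm none)) (e u)} = ∅ := by
        ext u; simp [stmt14Rel]
      rw [this, Set.ncard_empty]
    · -- in-degree n - 1
      have h1 : {u : Fin n | stmt14Rel m k (e u) (e (e.symm none))} =
          e ⁻¹' {x | stmt14Rel m k x none} := by
        simp [Set.preimage, Equiv.apply_symm_apply]
      have h2 : {x : Option (ZMod m) | stmt14Rel m k x none} = some '' Set.univ := by
        ext x; cases x <;> simp [stmt14Rel]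
      rw [h1, ← Equiv.symm_symm e, ← Equiv.image_eq_preimage_symm e.symm,
        Set.ncard_image_of_injective _ e.symm.injective, h2,
        Set.ncard_image_of_injective _ (Option.some_injective _),
        Set.ncard_univ, Nat.card_eq_fintype_card, ZMod.card]
    · -- the other vertices
      -- base counting fact
      have hbase : {c : ZMod m | c.val ∈ Set.Icc 1 k}.ncard = k := by
        have himg : {c : ZMod m | c.val ∈ Set.Icc 1 k} =
            (fun j : ℕ => (j : ZMod m)) '' Set.Icc 1 k := by
          ext c
          constructor
          · intro hc
            exact ⟨c.val, hc, ZMod.natCast_rightInverse c⟩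
          · rintro ⟨j, hj, rfl⟩
            have : j < m := by simp [Set.mem_Icc] at hj; omega
            simpa [Set.mem_setOf_eq, ZMod.val_cast_of_lt this] using hj
        have hinj : Set.InjOn (fun j : ℕ => (j : ZMod m)) (Set.Icc 1 k) := by
          intro j1 hj1 j2 hj2 hcast
          have l1 : j1 < m := by simp [Set.mem_Icc] at hj1; omega
          have l2 : j2 < m := by simp [Set.mem_Icc] at hj2; omega
          have := congrArg ZMod.val hcast
          rwa [ZMod.val_cast_of_lt l1, ZMod.val_cast_of_lt l2] at this
        rw [himg, Set.ncard_image_of_injOn hinj, ← Finset.coe_Icc,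
          Set.ncard_coe_finset, Nat.card_Icc]
        omega
      have hTout : ∀ a : ZMod m, {b : ZMod m | (b - a).val ∈ Set.Icc 1 k}.ncard = k := by
        intro a
        have himg : {b : ZMod m | (b - a).val ∈ Set.Icc 1 k} =
            (fun c : ZMod m => c + a) '' {c : ZMod m | c.val ∈ Set.Icc 1 k} := by
          ext b
          constructor
          · intro hb; exact ⟨b - a, hb, sub_add_cancel b a⟩
          · rintro ⟨c, hc, rfl⟩; simpa using hc
        rw [himg, Set.ncard_image_of_injective _ (add_left_injective a), hbase]
      have hTin : ∀ a : ZMod m, {b : ZMod m | (a - b).val ∈ Set.Icc 1 k}.ncard = k := by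
        intro a
        have himg : {b : ZMod m | (a - b).val ∈ Set.Icc 1 k} =
            (fun c : ZMod m => a - c) '' {c : ZMod m | c.val ∈ Set.Icc 1 k} := by
          ext b
          constructor
          · intro hb; exact ⟨a - b, hb, by ring⟩
          · rintro ⟨c, hc, rfl⟩; simpa using hc
        have hinj : Function.Injective (fun c : ZMod m => a - c) := fun c1 c2 h => by
          simpa using congrArg (fun x => a - x) h
        rw [himg, Set.ncard_image_of_injective _ hinj, hbase]
      intro v hv
      have hev' : e v ≠ none := by
        intro h
        exact hv (by rw [← e.symm_apply_apply v, h])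
      obtain ⟨a, ha⟩ := Option.ne_none_iff_exists'.mp hev'
      constructor
      · -- out-degree n/2
        have h1 : {u : Fin n | stmt14Rel m k (e v) (e u)} =
            e ⁻¹' {x | stmt14Rel m k (some a) x} := by
          simp [Set.preimage, ha]
        have h2 : {x : Option (ZMod m) | stmt14Rel m k (some a) x} =
            insert none (some '' {b : ZMod m | (b - a).val ∈ Set.Icc 1 k}) := by
          ext x; cases x <;> simp [stmt14Rel]
        have h3 : (none : Option (ZMod m)) ∉
            some '' {b : ZMod m | (b - a).val ∈ Set.Icc 1 k} := by simp
        rw [h1, ← Equiv.symm_symm e, ← Equiv.image_eq_preimage_symm e.symm,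
          Set.ncard_image_of_injective _ e.symm.injective, h2,
          Set.ncard_insert_of_notMem h3,
          Set.ncard_image_of_injective _ (Option.some_injective _), hTout a]
        omega
      · -- in-degree n/2 - 1
        have h1 : {u : Fin n | stmt14Rel m k (e u) (e v)} =
            e ⁻¹' {x | stmt14Rel m k x (some a)} := by
          simp [Set.preimage, ha]
        have h2 : {x : Option (ZMod m) | stmt14Rel m k x (some a)} =
            some '' {b : ZMod m | (a - b).val ∈ Set.Icc 1 k} := by
          ext x; cases x <;> simp [stmt14Rel]
        rw [h1, ← Equiv.symm_symm e, ← Equiv.image_eq_preimage_symm e.symm,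
          Set.ncard_image_of_injective _ e.symm.injective, h2,
          Set.ncard_image_of_injective _ (Option.some_injective _), hTin a]
        omega
end

section
/- Let P be a pot and suppose the construction-matrix system of P has a unique solution (r_1,...,r_p) with all r_j > 0 rational. Write each r_j = a_j/b_j in lowest terms and let L = lcm{b_j}. Then every graph in O(P) has order a multiple of L, and the smallest order of a graph in O(P) is L. -/
/-!
A nonzero balanced tile distribution `R` of order `n` normalizes to the point `R / n` of the
spectrum, so by uniqueness `R j = n * r j` for every `j`; hence every denominator of `r` divides
`n`, and so does their least common multiple `L`. Conversely `L * r` is a vector of natural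
numbers summing to `L` that satisfies the balance equations, so `L` itself is realized.
-/

open Finset

namespace Rat

theorem den_dvd_of_eq_natCast_div {q : ℚ} {k n : ℕ} (h : q = k / n) : q.den ∣ n := by
  rw [natCast_div_eq_divInt] at h
  exact Int.natCast_dvd_natCast.mp (h ▸ den_dvd k n)

theorem exists_natCast_eq_mul_of_den_dvd {q : ℚ} (hq : 0 ≤ q) {n : ℕ} (h : q.den ∣ n) :
    ∃ k : ℕ, (k : ℚ) = n * q := by
  refine ⟨n / q.den * q.num.toNat, ?_⟩
  have hnum : ((q.num.toNat : ℕ) : ℚ) = q.num := mod_cast Int.toNat_of_nonneg (num_nonneg.mpr hq)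
  rw [Nat.cast_mul, natCast_div _ _ h, hnum, ← mul_den_eq_num]
  field_simp

end Rat

section Spectrum

variable {κ ι : Type*} [Fintype ι] (z : κ → ι → ℤ)

/-- Membership in the spectrum `S(P)` of a pot whose construction matrix is `z`. -/
def InSpectrum (s : ι → ℚ) : Prop :=
  (∀ j, 0 ≤ s j) ∧ (∑ j, s j) = 1 ∧ ∀ i, (∑ j, (z i j : ℚ) * s j) = 0

def IsBalanced (R : ι → ℕ) : Prop :=
  ∀ i, (∑ j, (R j : ℤ) * z i j) = 0

variable {z}

theorem IsBalanced.inSpectrum_div_sum {R : ι → ℕ} (hR : IsBalanced z R) (hn : 0 < ∑ j, R j) :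
    InSpectrum z fun j => (R j : ℚ) / ∑ j, R j := by
  have hn' : (∑ j, (R j : ℚ)) ≠ 0 := by exact_mod_cast hn.ne'
  refine ⟨fun j => by positivity, ?_, fun i => ?_⟩
  · push_cast
    rw [← sum_div, div_self hn']
  · have hRi : (∑ j, (R j : ℚ) * z i j) = 0 := by exact_mod_cast hR i
    simp_rw [mul_div_assoc', ← sum_div, mul_comm (z i _ : ℚ)]
    push_cast
    rw [hRi, zero_div]

theorem IsBalanced.den_dvd_sum {r : ι → ℚ} (huniq : ∀ s, InSpectrum z s → s = r) {R : ι → ℕ}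
    (hR : IsBalanced z R) (hn : 0 < ∑ j, R j) (j : ι) : (r j).den ∣ ∑ j, R j :=
  Rat.den_dvd_of_eq_natCast_div (congrFun (huniq _ (hR.inSpectrum_div_sum hn)) j).symm

theorem InSpectrum.exists_isBalanced_sum_eq {r : ι → ℚ} (hr : InSpectrum z r) {n : ℕ}
    (hd : ∀ j, (r j).den ∣ n) : ∃ R : ι → ℕ, (∑ j, R j) = n ∧ IsBalanced z R := by
  obtain ⟨hnonneg, hsum, hbal⟩ := hr
  choose R hR using fun j => Rat.exists_natCast_eq_mul_of_den_dvd (hnonneg j) (hd j)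
  refine ⟨R, ?_, fun i => ?_⟩
  · have : ((∑ j, R j : ℕ) : ℚ) = n := by
      push_cast
      simp_rw [hR, ← mul_sum, hsum, mul_one]
    exact_mod_cast this
  · have : ((∑ j, (R j : ℤ) * z i j : ℤ) : ℚ) = 0 := by
      push_cast
      simp_rw [hR, mul_assoc, ← mul_sum, mul_comm _ (z i _ : ℚ), hbal i, mul_zero]
    exact_mod_cast this

end Spectrum

theorem stmt17_general {m p : ℕ} (z : Fin m → Fin p → ℤ) (r : Fin p → ℚ)
    (huniq : ∀ s : Fin p → ℚ,
      ((∀ j, 0 ≤ s j) ∧ (∑ j, s j) = 1 ∧ ∀ i, (∑ j, (z i j : ℚ) * s j) = 0) ↔ s = r)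
    (L : ℕ) (hL : L = Finset.univ.lcm fun j => (r j).den) :
    (∀ n : ℕ, 0 < n →
        (∃ R : Fin p → ℕ, (∑ j, R j) = n ∧ ∀ i, (∑ j, (R j : ℤ) * z i j) = 0) →
        L ∣ n) ∧
      IsLeast {n : ℕ | 0 < n ∧
        ∃ R : Fin p → ℕ, (∑ j, R j) = n ∧ ∀ i, (∑ j, (R j : ℤ) * z i j) = 0} L := by
  have hr : InSpectrum z r := (huniq r).mpr rfl
  have hL_dvd : ∀ n : ℕ, 0 < n →
      (∃ R : Fin p → ℕ, (∑ j, R j) = n ∧ IsBalanced z R) → L ∣ n := by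
    rintro n hn ⟨R, rfl, hR⟩
    exact hL ▸ lcm_dvd fun j _ => hR.den_dvd_sum (fun s hs => (huniq s).mp hs) hn j
  have hL_pos : 0 < L := by
    rw [hL, Nat.pos_iff_ne_zero, Finset.lcm_ne_zero_iff]
    exact fun j _ => (r j).den_nz
  refine ⟨hL_dvd, ⟨hL_pos, hr.exists_isBalanced_sum_eq fun j => ?_⟩,
    fun n hn => Nat.le_of_dvd hn.1 (hL_dvd n hn.1 hn.2)⟩
  exact hL ▸ dvd_lcm (mem_univ j)

/-- Suppose the construction-matrix system of a pot (with net-count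
matrix `z`) has the unique solution `r`, all of whose coordinates are positive
rationals.  Writing each `r j` in lowest terms and letting `L` be the least common
multiple of the denominators, every realizable order (i.e. every `n = ∑ j R j` for a
nonzero nonnegative integer solution `R` of the balance equations) is a multiple of
`L`, and the smallest realizable order is exactly `L`. -/
theorem stmt17 {m p : ℕ} (z : Fin m → Fin p → ℤ) (r : Fin p → ℚ)
    (hpos : ∀ j, 0 < r j)
    (huniq : ∀ s : Fin p → ℚ,
      ((∀ j, 0 ≤ s j) ∧ (∑ j, s j) = 1 ∧ ∀ i, (∑ j, (z i j : ℚ) * s j) = 0) ↔ s = r)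
    (L : ℕ) (hL : L = Finset.univ.lcm fun j => (r j).den) :
    (∀ n : ℕ, 0 < n →
        (∃ R : Fin p → ℕ, (∑ j, R j) = n ∧ ∀ i, (∑ j, (R j : ℤ) * z i j) = 0) →
        L ∣ n) ∧
      IsLeast {n : ℕ | 0 < n ∧
        ∃ R : Fin p → ℕ, (∑ j, R j) = n ∧ ∀ i, (∑ j, (R j : ℤ) * z i j) = 0} L :=
  stmt17_general z r huniq L hL
end

section
/- The disjoint union of optimal pots need not be optimal: the graph G = K_5 ⊔ S_4 ⊔ P_2 (complete graph on 5 vertices, star with 4 leaves, path on 2 vertices) is realized in Scenario 1 by the 3-tile pot {a²â², a, â}, i.e., there is an orientation of G in which every vertex has (out,in)-degree pair equal to (2,2), (1,0), or (0,1). -/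
/-- Vertices of `K₅ ⊔ S₄ ⊔ P₂`: five `K₅` vertices, five star vertices (the center
is `0`, the other four are leaves), and two path vertices. -/
abbrev V19 : Type := Fin 5 ⊕ (Fin 5 ⊕ Fin 2)

/-- Generating relation for the disjoint union `K₅ ⊔ S₄ ⊔ P₂`. -/
def rel19 : V19 → V19 → Prop := fun u v =>
  match u, v with
  | Sum.inl _, Sum.inl _ => True
  | Sum.inr (Sum.inl i), Sum.inr (Sum.inl _) => i = 0
  | Sum.inr (Sum.inr _), Sum.inr (Sum.inr _) => True
  | _, _ => False

/-- The graph `G = K₅ ⊔ S₄ ⊔ P₂`. -/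
def G19 : SimpleGraph V19 := SimpleGraph.fromRel rel19

/-- Out-degree of a vertex in a directed graph. -/
noncomputable def odeg (dir : V19 → V19 → Prop) (v : V19) : ℕ := {u | dir v u}.ncard

/-- In-degree of a vertex in a directed graph. -/
noncomputable def ideg (dir : V19 → V19 → Prop) (v : V19) : ℕ := {u | dir u v}.ncard

/-!
On `K₅` take the circulant tournament `i → i + 1, i + 2 (mod 5)`, in which every vertex
has two out- and two in-neighbours. The star center sends edges to two leaves and receives
edges from the other two, and the edge of `P₂` is oriented either way. Every degree pair is
then `(2,2)`, `(1,0)` or `(0,1)`, which is a finite check.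
-/

instance : DecidableRel rel19 := fun u v => by
  rcases u with i | (i | i) <;> rcases v with j | (j | j) <;>
    simp only [rel19] <;> infer_instance

instance : DecidableRel G19.Adj := fun u v => by
  rw [G19, SimpleGraph.fromRel_adj]; infer_instance

def orient19 : V19 → V19 → Prop
  | Sum.inl i, Sum.inl j => j = i + 1 ∨ j = i + 2
  | Sum.inr (Sum.inl i), Sum.inr (Sum.inl j) =>
      (i = 0 ∧ (j = 1 ∨ j = 2)) ∨ (j = 0 ∧ (i = 3 ∨ i = 4))
  | Sum.inr (Sum.inr i), Sum.inr (Sum.inr j) => i = 0 ∧ j = 1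
  | _, _ => False

instance : DecidableRel orient19 := fun u v => by
  rcases u with i | (i | i) <;> rcases v with j | (j | j) <;>
    simp only [orient19] <;> infer_instance

theorem G19_adj_of_orient19 {u v : V19} (h : orient19 u v) : G19.Adj u v := by
  revert u v; decide

theorem orient19_iff_not_of_adj {u v : V19} (h : G19.Adj u v) :
    orient19 u v ↔ ¬ orient19 v u := by
  revert u v; decide

theorem odeg_eq_card_filter (dir : V19 → V19 → Prop) [DecidableRel dir] (v : V19) :
    odeg dir v = (Finset.univ.filter (dir v)).card := by
  rw [odeg, ← Set.ncard_coe_finset, Finset.coe_filter_univ]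

theorem ideg_eq_card_filter (dir : V19 → V19 → Prop) [DecidableRel dir] (v : V19) :
    ideg dir v = (Finset.univ.filter (dir · v)).card := by
  rw [ideg, ← Set.ncard_coe_finset, Finset.coe_filter_univ]

theorem degrees_orient19_complete (i : Fin 5) :
    (odeg orient19 (Sum.inl i), ideg orient19 (Sum.inl i)) = (2, 2) := by
  simp only [odeg_eq_card_filter, ideg_eq_card_filter]; revert i; decide

theorem degrees_orient19_center :
    (odeg orient19 (Sum.inr (Sum.inl 0)), ideg orient19 (Sum.inr (Sum.inl 0))) = (2, 2) := by
  simp only [odeg_eq_card_filter, ideg_eq_card_filter]; decide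

theorem degrees_orient19_leaf {i : Fin 5} (hi : i ≠ 0) :
    (odeg orient19 (Sum.inr (Sum.inl i)), ideg orient19 (Sum.inr (Sum.inl i))) ∈
      ({(1, 0), (0, 1)} : Set (ℕ × ℕ)) := by
  simp only [odeg_eq_card_filter, ideg_eq_card_filter, Set.mem_insert_iff,
    Set.mem_singleton_iff]
  revert i; decide

theorem degrees_orient19_path :
    (odeg orient19 (Sum.inr (Sum.inr 0)), ideg orient19 (Sum.inr (Sum.inr 0))) = (1, 0) ∧
      (odeg orient19 (Sum.inr (Sum.inr 1)), ideg orient19 (Sum.inr (Sum.inr 1))) = (0, 1) := by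
  simp only [odeg_eq_card_filter, ideg_eq_card_filter]; decide

/-- The graph `G = K₅ ⊔ S₄ ⊔ P₂` is realized in Scenario 1 by the
3-tile pot `{a²â², a, â}`: there is an orientation of `G` in which every vertex has
(out-degree, in-degree) pair `(2,2)`, `(1,0)` or `(0,1)`.  Precisely, every `K₅`
vertex and the star center get `(2,2)`, each star leaf gets `(1,0)` or `(0,1)`, and
the two `P₂` endpoints get `(1,0)` and `(0,1)` in some order. -/
theorem stmt19 :
    ∃ dir : V19 → V19 → Prop,
      (∀ u v, dir u v → G19.Adj u v) ∧
      (∀ u v, G19.Adj u v → (dir u v ↔ ¬ dir v u)) ∧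
      (∀ v : V19, (odeg dir v, ideg dir v) ∈ ({(2,2),(1,0),(0,1)} : Set (ℕ × ℕ))) ∧
      (∀ i : Fin 5, (odeg dir (Sum.inl i), ideg dir (Sum.inl i)) = (2,2)) ∧
      (odeg dir (Sum.inr (Sum.inl 0)), ideg dir (Sum.inr (Sum.inl 0))) = (2,2) ∧
      (∀ i : Fin 5, i ≠ 0 →
        (odeg dir (Sum.inr (Sum.inl i)), ideg dir (Sum.inr (Sum.inl i)))
          ∈ ({(1,0),(0,1)} : Set (ℕ × ℕ))) ∧
      (((odeg dir (Sum.inr (Sum.inr 0)), ideg dir (Sum.inr (Sum.inr 0))) = (1,0) ∧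
          (odeg dir (Sum.inr (Sum.inr 1)), ideg dir (Sum.inr (Sum.inr 1))) = (0,1)) ∨
        ((odeg dir (Sum.inr (Sum.inr 0)), ideg dir (Sum.inr (Sum.inr 0))) = (0,1) ∧
          (odeg dir (Sum.inr (Sum.inr 1)), ideg dir (Sum.inr (Sum.inr 1))) = (1,0))) := by
  have all_vertices : ∀ v : V19,
      (odeg orient19 v, ideg orient19 v) ∈ ({(2,2),(1,0),(0,1)} : Set (ℕ × ℕ)) := by
    rintro (i | (i | i))
    · exact .inl (degrees_orient19_complete i)
    · by_cases hi : i = 0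
      · subst hi; exact .inl degrees_orient19_center
      · exact .inr (degrees_orient19_leaf hi)
    · fin_cases i
      · exact .inr (.inl degrees_orient19_path.1)
      · exact .inr (.inr degrees_orient19_path.2)
  exact ⟨orient19, fun _ _ => G19_adj_of_orient19, fun _ _ => orient19_iff_not_of_adj,
    all_vertices, degrees_orient19_complete, degrees_orient19_center,
    fun _ => degrees_orient19_leaf, .inl degrees_orient19_path⟩
end
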